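/- Consider the switched linear system with discrete and distributed delays ẋ(t) = A⁰_{σ(t)} x(t) + Σ_{i=1}^{m} A^i_{σ(t)} x(t − h^i_{σ(t)}) + ∫_{−h}^{0} B_{σ(t)}(θ) x(t+θ) dθ, t ≥ 0, σ ∈ Σ₊, where for each k = 1,…,N the delays satisfy 0 < h^1_k ≤ … ≤ h^m_k ≤ h, A⁰_k, A^i_k ∈ ℝ^{n×n}, and B_k : [−h,0] → ℝ^{n×n} is continuous. If there exists ξ ∈ ℝⁿ, ξ ≫ 0, such that (M(A⁰_k) + Σ_{i=1}^{m} |A^i_k| + ∫_{−h}^{0} |B_k(s)| ds) ξ ≪ 0 for every k = 1,…,N, then the system is exponentially stable under arbitrary switching: there exist M > 0, α > 0 such that every solution with initial function φ ∈ C([−h,0],ℝⁿ) and any σ ∈ Σ₊ satisfies ‖x(t)‖ ≤ M e^{−αt} ‖φ‖ for all t ≥ 0. -/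

import Mathlib

/-!
Weighted by `ξ`, the envelope `C ξᵢ e^{-αt}` is forward invariant for every mode at once.
For small `α > 0` the strict inequality `(M(A⁰_k) + Σ|A^l_k| + ∫|B_k|) ξ ≪ 0` survives adding
`α ξ` and inflating the delayed part by `e^{αh}`, the largest growth of the envelope over a
delay window. If a solution left the envelope, then at the first exit time `T` some component
`±xᵢ` touches it while the whole history over `[T - h, T]` is still inside; the Metzler
structure then makes the right-hand side of the active mode at `T` strictly smaller than the
envelope's derivative. Since the switching signal is constant just after `T`, the component is
pushed back inside on some interval `(T, T + δ)`, contradicting that `T` is the exit time.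
-/

open MeasureTheory Set Filter Matrix
open scoped ENNReal

noncomputable section

/-- Row-sum matrix norm (the operator norm induced by the `∞`-norm). -/
def matNorm {p q : ℕ} (A : Matrix (Fin p) (Fin q) ℝ) : ℝ :=
  ⨆ i, ∑ j, |A i j|

/-- The Metzler matrix `M(A)` associated with `A`. -/
def metz {n : ℕ} (A : Matrix (Fin n) (Fin n) ℝ) : Matrix (Fin n) (Fin n) ℝ :=
  Matrix.of fun i j => if i = j then A i j else |A i j|

/-- A switching signal: piecewise constant, right continuous, with strictly
positive dwell time (and normalized to be constant on `(-∞, 0]`). -/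
def IsSwitchingSignal {N : ℕ} (σ : ℝ → Fin N) : Prop :=
  (∀ t ≤ (0:ℝ), σ t = σ 0) ∧
  ∃ d : ℝ, 0 < d ∧ ∃ τ : ℕ → ℝ, τ 0 = 0 ∧ (∀ k, τ k + d ≤ τ (k + 1)) ∧
    ∀ k : ℕ, ∀ t ∈ Set.Ico (τ k) (τ (k + 1)), σ t = σ (τ k)

/-- `x` is a solution of the switched system with discrete delays `hd` and distributed
delay kernel `B`:
`ẋ(t) = A⁰_{σ(t)} x(t) + Σ_l A^l_{σ(t)} x(t - h^l_{σ(t)}) + ∫_{-h}^0 B_{σ(t)}(θ) x(t+θ) dθ`,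
with switching signal `σ` and initial function `φ`. -/
def IsSolutionD (h : ℝ) {N n m : ℕ} (σ : ℝ → Fin N)
    (A0 : Fin N → Matrix (Fin n) (Fin n) ℝ)
    (A : Fin N → Fin m → Matrix (Fin n) (Fin n) ℝ)
    (hd : Fin N → Fin m → ℝ)
    (B : Fin N → ℝ → Matrix (Fin n) (Fin n) ℝ)
    (φ : C(Set.Icc (-h) (0:ℝ), Fin n → ℝ)) (x : ℝ → Fin n → ℝ) : Prop :=
  ContinuousOn x (Set.Ici (-h)) ∧
  (∀ θ : Set.Icc (-h) (0:ℝ), x (θ : ℝ) = φ θ) ∧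
  ∀ t : ℝ, 0 ≤ t → (∀ᶠ s in nhds t, σ s = σ t) → ∀ i,
    HasDerivWithinAt (fun s => x s i)
      ((∑ j, A0 (σ t) i j * x t j) + (∑ l, ∑ j, A (σ t) l i j * x (t - hd (σ t) l) j) +
        ∑ j, ∫ θ in (-h)..(0:ℝ), B (σ t) θ i j * x (t + θ) j)
      (Set.Ici t) t

/-- Exponential stability, under arbitrary switching, of the switched system with
discrete and distributed delays. -/
def ExpStableSwD (h : ℝ) {N n m : ℕ}
    (A0 : Fin N → Matrix (Fin n) (Fin n) ℝ)
    (A : Fin N → Fin m → Matrix (Fin n) (Fin n) ℝ)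
    (hd : Fin N → Fin m → ℝ)
    (B : Fin N → ℝ → Matrix (Fin n) (Fin n) ℝ) : Prop :=
  ∃ M > (0:ℝ), ∃ α > (0:ℝ), ∀ σ : ℝ → Fin N, IsSwitchingSignal σ →
    ∀ φ x, IsSolutionD h σ A0 A hd B φ x →
      ∀ t ≥ (0:ℝ), ‖x t‖ ≤ M * Real.exp (-α * t) * ‖φ‖

/-- `x` is a solution of the (non-switched) system with discrete delays `hd` and
distributed delay kernel `B`, with initial function `φ`. -/
def IsSolutionD1 (h : ℝ) {n m : ℕ}
    (A0 : Matrix (Fin n) (Fin n) ℝ)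
    (A : Fin m → Matrix (Fin n) (Fin n) ℝ)
    (hd : Fin m → ℝ)
    (B : ℝ → Matrix (Fin n) (Fin n) ℝ)
    (φ : C(Set.Icc (-h) (0:ℝ), Fin n → ℝ)) (x : ℝ → Fin n → ℝ) : Prop :=
  ContinuousOn x (Set.Ici (-h)) ∧
  (∀ θ : Set.Icc (-h) (0:ℝ), x (θ : ℝ) = φ θ) ∧
  ∀ t : ℝ, 0 ≤ t → ∀ i,
    HasDerivWithinAt (fun s => x s i)
      ((∑ j, A0 i j * x t j) + (∑ l, ∑ j, A l i j * x (t - hd l) j) +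
        ∑ j, ∫ θ in (-h)..(0:ℝ), B θ i j * x (t + θ) j)
      (Set.Ici t) t

/-- Exponential stability of a single (non-switched) system with discrete and
distributed delays. -/
def ExpStableD1 (h : ℝ) {n m : ℕ}
    (A0 : Matrix (Fin n) (Fin n) ℝ)
    (A : Fin m → Matrix (Fin n) (Fin n) ℝ)
    (hd : Fin m → ℝ)
    (B : ℝ → Matrix (Fin n) (Fin n) ℝ) : Prop :=
  ∃ M > (0:ℝ), ∃ α > (0:ℝ), ∀ φ x, IsSolutionD1 h A0 A hd B φ x →
    ∀ t ≥ (0:ℝ), ‖x t‖ ≤ M * Real.exp (-α * t) * ‖φ‖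
open Topology

theorem mul_le_abs_of_abs_eq_one {s : ℝ} (hs : |s| = 1) (y : ℝ) : s * y ≤ |y| :=
  (le_abs_self _).trans_eq (by rw [abs_mul, hs, one_mul])

theorem exists_apply_le_and_lt_apply_succ {α : Type*} [LinearOrder α] {f : ℕ → α} {x : α}
    (h0 : f 0 ≤ x) (hx : ∃ n, x < f n) : ∃ n, f n ≤ x ∧ x < f (n + 1) := by
  classical
  obtain ⟨n, hn⟩ := hx
  have hex : ∃ k, x < f (k + 1) := by
    cases n with
    | zero => exact absurd h0 (not_le.2 hn)
    | succ k => exact ⟨k, hn⟩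
  refine ⟨Nat.find hex, ?_, Nat.find_spec hex⟩
  rcases Nat.eq_zero_or_pos (Nat.find hex) with h | h
  · rwa [h]
  · have := Nat.find_min hex (Nat.sub_one_lt h.ne')
    rwa [Nat.sub_one_add_one h.ne', not_lt] at this

theorem one_le_norm_inv_mul_apply {ι : Type*} [Fintype ι] {ξ : ι → ℝ} {j : ι} (hξ : 0 < ξ j) :
    1 ≤ ‖ξ⁻¹‖ * ξ j :=
  calc 1 = (ξ j)⁻¹ * ξ j := (inv_mul_cancel₀ hξ.ne').symm
    _ ≤ ‖ξ⁻¹‖ * ξ j := mul_le_mul_of_nonneg_right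
        ((Real.le_norm_self (ξ⁻¹ j)).trans (norm_le_pi_norm ξ⁻¹ j)) hξ.le

theorem exists_pos_forall_add_exp_mul_add_mul_neg {ι : Type*} [Finite ι] {p q r : ι → ℝ}
    (h : ℝ) (hpq : ∀ j, p j + q j < 0) :
    ∃ α > 0, ∀ j, p j + Real.exp (α * h) * q j + α * r j < 0 := by
  have hnear : ∀ᶠ α in 𝓝 (0 : ℝ), ∀ j, p j + Real.exp (α * h) * q j + α * r j < 0 :=
    eventually_all.2 fun j => by
      have hcont : Continuous fun α : ℝ => p j + Real.exp (α * h) * q j + α * r j := by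
        fun_prop
      exact hcont.tendsto 0 |>.eventually (eventually_lt_nhds (by simpa using hpq j))
  obtain ⟨α, hα, hαpos⟩ := ((hnear.filter_mono nhdsWithin_le_nhds).and
    (self_mem_nhdsWithin : Ioi (0 : ℝ) ∈ 𝓝[>] 0)).exists
  exact ⟨α, hαpos, hα⟩

theorem exists_abs_eq_one_frequently_lt_mul {α ι : Type*} [Finite ι] {l : Filter α}
    {x b : α → ι → ℝ} (h : ∃ᶠ u in l, ∃ i, b u i < |x u i|) :
    ∃ i, ∃ s : ℝ, |s| = 1 ∧ ∃ᶠ u in l, b u i < s * x u i := by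
  obtain ⟨i, hi⟩ := frequently_exists.1 h
  simp_rw [lt_abs] at hi
  rcases frequently_or_distrib.1 hi with hpos | hneg
  · exact ⟨i, 1, by simp, by simpa using hpos⟩
  · exact ⟨i, -1, by simp, by simpa using hneg⟩

theorem exists_first_exit {ι : Type*} [Finite ι] {x b : ℝ → ι → ℝ} {a c : ℝ} (hac : a ≤ c)
    (hx : ContinuousOn x (Ici a)) (hb : ContinuousOn b (Ici a))
    (hinit : ∀ u ∈ Icc a c, ∀ i, |x u i| ≤ b u i) (hexit : ∃ u ≥ a, ∃ i, b u i < |x u i|) :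
    ∃ T ≥ c, (∀ u ∈ Icc a T, ∀ i, |x u i| ≤ b u i) ∧
      ∃ᶠ u in 𝓝[>] T, ∃ i, b u i < |x u i| := by
  set S := {u | a ≤ u ∧ ∃ i, b u i < |x u i|}
  have hSbdd : BddBelow S := ⟨a, fun u hu => hu.1⟩
  have hSne : S.Nonempty := let ⟨u, hu, hui⟩ := hexit; ⟨u, hu, hui⟩
  have hcT : c ≤ sInf S := le_csInf hSne fun u ⟨hau, i, hi⟩ =>
    le_of_not_ge fun huc => (hinit u ⟨hau, huc⟩ i).not_gt hi
  have hbelow : ∀ u ∈ Ico a (sInf S), ∀ i, |x u i| ≤ b u i := fun u hu i =>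
    not_lt.1 fun hi => hu.2.not_ge (csInf_le hSbdd ⟨hu.1, i, hi⟩)
  have hbound : ∀ u ∈ Icc a (sInf S), ∀ i, |x u i| ≤ b u i := by
    rcases le_or_gt (sInf S) c with hTc | hcT'
    · exact fun u hu => hinit u ⟨hu.1, hu.2.trans hTc⟩
    intro u hu i
    have hclosed : IsClosed (Icc a (sInf S) ∩ (fun u => |x u i| - b u i) ⁻¹' Iic 0) :=
      ContinuousOn.preimage_isClosed_of_isClosed
        (((continuous_apply i).comp_continuousOn hx).abs.sub
          ((continuous_apply i).comp_continuousOn hb) |>.mono Icc_subset_Ici_self)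
        isClosed_Icc isClosed_Iic
    have hsub : Ico a (sInf S) ⊆ Icc a (sInf S) ∩ (fun u => |x u i| - b u i) ⁻¹' Iic 0 :=
      fun v hv => ⟨Ico_subset_Icc_self hv, sub_nonpos.2 (hbelow v hv i)⟩
    rw [← closure_Ico (hac.trans_lt hcT').ne] at hu
    exact sub_nonpos.1 (hclosed.closure_subset_iff.2 hsub hu).2
  refine ⟨sInf S, hcT, hbound, (nhdsGT_basis _).frequently_iff.2 fun ε hε => ?_⟩
  obtain ⟨u, huS, huε⟩ := exists_lt_of_csInf_lt hSne hε
  refine ⟨u, ⟨(csInf_le hSbdd huS).lt_of_ne ?_, huε⟩, huS.2⟩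
  rintro rfl
  obtain ⟨i, hi⟩ := huS.2
  exact (hbound _ ⟨huS.1, le_rfl⟩ i).not_gt hi

theorem le_of_hasDerivWithinAt_Ici_nonpos {g g' : ℝ → ℝ} {a b : ℝ} (hab : a ≤ b)
    (hg : ContinuousOn g (Icc a b)) (hg' : ∀ u ∈ Ioo a b, HasDerivWithinAt g (g' u) (Ici u) u)
    (hg'0 : ∀ u ∈ Ioo a b, g' u ≤ 0) : g b ≤ g a := by
  rcases hab.eq_or_lt with rfl | hab
  · exact le_rfl
  -- no right derivative is assumed at `a`: compare on `[a', b]` and let `a' → a`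
  have hmid : ∀ a' ∈ Ioo a b, g b ≤ g a' := fun a' ha' =>
    image_le_of_deriv_right_le_deriv_boundary (B := fun _ => g a') (B' := 0)
      (hg.mono (Icc_subset_Icc_left ha'.1.le)) (fun u hu => hg' u ⟨ha'.1.trans_le hu.1, hu.2⟩)
      le_rfl continuousOn_const (fun u _ => hasDerivWithinAt_const u _ (g a'))
      (fun u hu => hg'0 u ⟨ha'.1.trans_le hu.1, hu.2⟩) (right_mem_Icc.2 ha'.2.le)
  have hlim : Tendsto g (𝓝[Ioo a b] a) (𝓝 (g a)) :=
    (hg a (left_mem_Icc.2 hab.le)).mono Ioo_subset_Icc_self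
  have hev : ∀ᶠ a' in 𝓝[Ioo a b] a, g b ≤ g a' := eventually_nhdsWithin_of_forall hmid
  rw [nhdsWithin_Ioo_eq_nhdsGT hab] at hlim hev
  exact ge_of_tendsto hlim hev

theorem eventually_le_of_hasDerivWithinAt_Ici_nonpos {g g' : ℝ → ℝ} {a : ℝ}
    (hg : ContinuousOn g (Ici a))
    (hg' : ∀ᶠ u in 𝓝[>] a, HasDerivWithinAt g (g' u) (Ici u) u ∧ g' u ≤ 0) :
    ∀ᶠ u in 𝓝[>] a, g u ≤ g a := by
  obtain ⟨c, hac, hc⟩ := mem_nhdsGT_iff_exists_Ioo_subset.1 hg'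
  filter_upwards [Ioo_mem_nhdsGT hac] with u hu
  exact le_of_hasDerivWithinAt_Ici_nonpos hu.1.le (hg.mono Icc_subset_Ici_self)
    (fun v hv => (hc ⟨hv.1, hv.2.trans hu.2⟩).1) (fun v hv => (hc ⟨hv.1, hv.2.trans hu.2⟩).2)

theorem IsSwitchingSignal.eventually_nhdsGE_eq {N : ℕ} {σ : ℝ → Fin N}
    (hσ : IsSwitchingSignal σ) {T : ℝ} (hT : 0 ≤ T) : ∀ᶠ u in 𝓝[≥] T, σ u = σ T := by
  obtain ⟨-, d, hd, τ, hτ0, hτd, hτσ⟩ := hσ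
  have hτ : ∀ k : ℕ, k * d ≤ τ k := by
    intro k
    induction k with
    | zero => simp [hτ0]
    | succ k ih => push_cast; linarith [hτd k]
  have hunbdd : ∃ k, T < τ k := by
    obtain ⟨k, hk⟩ := exists_nat_gt (T / d)
    exact ⟨k, ((div_lt_iff₀ hd).1 hk).trans_le (hτ k)⟩
  obtain ⟨k, hkT, hTk⟩ := exists_apply_le_and_lt_apply_succ (hτ0 ▸ hT) hunbdd
  filter_upwards [Ico_mem_nhdsGE hTk] with u hu
  rw [hτσ k u ⟨hkT.trans hu.1, hu.2⟩, hτσ k T ⟨hkT, hTk⟩]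

theorem IsSwitchingSignal.eventually_nhdsGT_eventually_nhds_eq {N : ℕ} {σ : ℝ → Fin N}
    (hσ : IsSwitchingSignal σ) {T : ℝ} (hT : 0 ≤ T) :
    ∀ᶠ u in 𝓝[>] T, T < u ∧ σ u = σ T ∧ ∀ᶠ s in 𝓝 u, σ s = σ u := by
  obtain ⟨c, hTc, hc⟩ := mem_nhdsGE_iff_exists_Ico_subset.1 (hσ.eventually_nhdsGE_eq hT)
  filter_upwards [Ioo_mem_nhdsGT hTc] with u hu
  refine ⟨hu.1, hc ⟨hu.1.le, hu.2⟩, ?_⟩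
  filter_upwards [Ioo_mem_nhds hu.1 hu.2] with s hs
  rw [hc ⟨hs.1.le, hs.2⟩, hc ⟨hu.1.le, hu.2⟩]

-- Written with explicit sums so that it is definitionally the derivative in `IsSolutionD`.
def delayField (h : ℝ) {n m : ℕ} (A0 : Matrix (Fin n) (Fin n) ℝ)
    (A : Fin m → Matrix (Fin n) (Fin n) ℝ) (hd : Fin m → ℝ) (B : ℝ → Matrix (Fin n) (Fin n) ℝ)
    (x : ℝ → Fin n → ℝ) (t : ℝ) (i : Fin n) : ℝ :=
  (∑ j, A0 i j * x t j) + (∑ l, ∑ j, A l i j * x (t - hd l) j) +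
    ∑ j, ∫ θ in (-h)..(0:ℝ), B θ i j * x (t + θ) j

def delayMajorant (h : ℝ) {n m : ℕ} (A : Fin m → Matrix (Fin n) (Fin n) ℝ)
    (B : ℝ → Matrix (Fin n) (Fin n) ℝ) : Matrix (Fin n) (Fin n) ℝ :=
  (∑ l, Matrix.of fun a b => |A l a b|) + Matrix.of fun a b => ∫ s in (-h)..(0:ℝ), |B s a b|

theorem delayMajorant_mulVec_apply (h : ℝ) {n m : ℕ} (A : Fin m → Matrix (Fin n) (Fin n) ℝ)
    (B : ℝ → Matrix (Fin n) (Fin n) ℝ) (v : Fin n → ℝ) (i : Fin n) :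
    (delayMajorant h A B *ᵥ v) i =
      (∑ l, ∑ j, |A l i j| * v j) + ∑ j, (∫ s in (-h)..(0:ℝ), |B s i j|) * v j := by
  rw [delayMajorant, add_mulVec, sum_mulVec]
  simp only [Pi.add_apply, Finset.sum_apply, mulVec, dotProduct, of_apply]

theorem mul_mulVec_apply_le_metz_mulVec_apply {n : ℕ} (A : Matrix (Fin n) (Fin n) ℝ)
    {y v : Fin n → ℝ} {s : ℝ} {i : Fin n} (hs : |s| = 1) (hy : ∀ j, |y j| ≤ v j)
    (hyi : s * y i = v i) : s * (A *ᵥ y) i ≤ (metz A *ᵥ v) i := by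
  simp only [mulVec, dotProduct, Finset.mul_sum]
  refine Finset.sum_le_sum fun j _ => ?_
  by_cases hij : i = j
  · subst hij
    simp [metz, ← hyi, mul_left_comm]
  · calc s * (A i j * y j) ≤ |A i j| * |y j| := by
          rw [← abs_mul]; exact mul_le_abs_of_abs_eq_one hs _
      _ ≤ metz A i j * v j := by
          rw [metz, of_apply, if_neg hij]; exact mul_le_mul_of_nonneg_left (hy j) (abs_nonneg _)

theorem mul_sum_mul_le_sum_abs_mul {ι : Type*} (S : Finset ι) {a y v : ι → ℝ} {s : ℝ}
    (hs : |s| = 1) (hy : ∀ j, |y j| ≤ v j) : s * ∑ j ∈ S, a j * y j ≤ ∑ j ∈ S, |a j| * v j := by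
  rw [Finset.mul_sum]
  refine Finset.sum_le_sum fun j _ => ?_
  calc s * (a j * y j) ≤ |a j| * |y j| := by rw [← abs_mul]; exact mul_le_abs_of_abs_eq_one hs _
    _ ≤ |a j| * v j := mul_le_mul_of_nonneg_left (hy j) (abs_nonneg _)

theorem mul_integral_mul_le {f y : ℝ → ℝ} {a b c s : ℝ} (hs : |s| = 1) (hab : a ≤ b)
    (hf : IntervalIntegrable f volume a b) (hy : ∀ θ ∈ Icc a b, |y θ| ≤ c) :
    s * ∫ θ in a..b, f θ * y θ ≤ (∫ θ in a..b, |f θ|) * c := by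
  calc s * ∫ θ in a..b, f θ * y θ ≤ |∫ θ in a..b, f θ * y θ| := mul_le_abs_of_abs_eq_one hs _
    _ ≤ ∫ θ in a..b, |f θ * y θ| := intervalIntegral.abs_integral_le_integral_abs hab
    _ ≤ ∫ θ in a..b, |f θ| * c := by
        rw [intervalIntegral.integral_of_le hab, intervalIntegral.integral_of_le hab]
        refine integral_mono_of_nonneg (.of_forall fun θ => abs_nonneg _) (hf.abs.1.mul_const c)
          ((ae_restrict_mem measurableSet_Ioc).mono fun θ hθ => ?_)
        change |f θ * y θ| ≤ |f θ| * c
        rw [abs_mul]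
        exact mul_le_mul_of_nonneg_left (hy θ (Ioc_subset_Icc_self hθ)) (abs_nonneg _)
    _ = (∫ θ in a..b, |f θ|) * c := intervalIntegral.integral_mul_const c _

theorem mul_delayField_le {h : ℝ} (hh : 0 ≤ h) {n m : ℕ} (A0 : Matrix (Fin n) (Fin n) ℝ)
    (A : Fin m → Matrix (Fin n) (Fin n) ℝ) {hd : Fin m → ℝ} {B : ℝ → Matrix (Fin n) (Fin n) ℝ}
    (hd0 : ∀ l, 0 ≤ hd l) (hdh : ∀ l, hd l ≤ h)
    (hB : ∀ i j, IntervalIntegrable (fun θ => B θ i j) volume (-h) 0)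
    {x : ℝ → Fin n → ℝ} {t s : ℝ} {i : Fin n} {v V : Fin n → ℝ} (hs : |s| = 1)
    (hxt : ∀ j, |x t j| ≤ v j) (hxi : s * x t i = v i)
    (hhist : ∀ u ∈ Icc (t - h) t, ∀ j, |x u j| ≤ V j) :
    s * delayField h A0 A hd B x t i ≤ (metz A0 *ᵥ v) i + (delayMajorant h A B *ᵥ V) i := by
  have hcur : s * ∑ j, A0 i j * x t j ≤ (metz A0 *ᵥ v) i :=
    mul_mulVec_apply_le_metz_mulVec_apply A0 hs hxt hxi
  have hdisc : s * ∑ l, ∑ j, A l i j * x (t - hd l) j ≤ ∑ l, ∑ j, |A l i j| * V j := by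
    rw [Finset.mul_sum]
    exact Finset.sum_le_sum fun l _ => mul_sum_mul_le_sum_abs_mul _ hs
      (hhist _ ⟨by linarith [hdh l], by linarith [hd0 l]⟩)
  have hdist : s * ∑ j, ∫ θ in (-h)..(0:ℝ), B θ i j * x (t + θ) j ≤
      ∑ j, (∫ θ in (-h)..(0:ℝ), |B θ i j|) * V j := by
    rw [Finset.mul_sum]
    exact Finset.sum_le_sum fun j _ => mul_integral_mul_le hs (neg_nonpos.2 hh) (hB i j)
      fun θ hθ => hhist _ ⟨by linarith [hθ.1], by linarith [hθ.2]⟩ j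
  rw [delayMajorant_mulVec_apply, delayField, mul_add, mul_add]
  linarith

theorem delayField_congr {h : ℝ} (hh : 0 ≤ h) {n m : ℕ} (A0 : Matrix (Fin n) (Fin n) ℝ)
    (A : Fin m → Matrix (Fin n) (Fin n) ℝ) {hd : Fin m → ℝ} (hdh : ∀ l, hd l ≤ h)
    (B : ℝ → Matrix (Fin n) (Fin n) ℝ) {x y : ℝ → Fin n → ℝ} {t : ℝ}
    (hxy : EqOn x y (Ici (t - h))) (i : Fin n) :
    delayField h A0 A hd B x t i = delayField h A0 A hd B y t i := by
  have hmem : ∀ u, t - h ≤ u → x u = y u := fun u hu => hxy hu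
  unfold delayField
  rw [hmem t (by linarith)]
  congr 1
  · congr 1
    exact Finset.sum_congr rfl fun l _ => by rw [hmem _ (by linarith [hdh l])]
  · refine Finset.sum_congr rfl fun j _ => intervalIntegral.integral_congr fun θ hθ => ?_
    rw [uIcc_of_le (neg_nonpos.2 hh)] at hθ
    simp only [hmem (t + θ) (by linarith [hθ.1])]

theorem continuous_intervalIntegral_mul_comp_add {f y : ℝ → ℝ} {a b : ℝ} (hab : a ≤ b)
    (hf : ContinuousOn f (Icc a b)) (hy : Continuous y) :
    Continuous fun u => ∫ θ in a..b, f θ * y (u + θ) := by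
  set F := IccExtend hab ((Icc a b).domRestrict f)
  have hF : Continuous F := hf.domRestrict.Icc_extend'
  have hfF : ∀ u, ∫ θ in a..b, f θ * y (u + θ) = ∫ θ in a..b, F θ * y (u + θ) := fun u =>
    intervalIntegral.integral_congr fun θ hθ => by
      rw [uIcc_of_le hab] at hθ
      simp [F, IccExtend_of_mem hab _ hθ]
  simp_rw [hfF]
  exact intervalIntegral.continuous_parametric_intervalIntegral_of_continuous'
    ((hF.comp continuous_snd).mul (hy.comp (continuous_fst.add continuous_snd))) a b

theorem continuousOn_delayField {h : ℝ} (hh : 0 ≤ h) {n m : ℕ} (A0 : Matrix (Fin n) (Fin n) ℝ)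
    (A : Fin m → Matrix (Fin n) (Fin n) ℝ) {hd : Fin m → ℝ} (hdh : ∀ l, hd l ≤ h)
    {B : ℝ → Matrix (Fin n) (Fin n) ℝ} (hB : ∀ i j, ContinuousOn (fun θ => B θ i j) (Icc (-h) 0))
    {x : ℝ → Fin n → ℝ} (hx : ContinuousOn x (Ici (-h))) (i : Fin n) :
    ContinuousOn (fun t => delayField h A0 A hd B x t i) (Ici 0) := by
  set x' : ℝ → Fin n → ℝ := fun t => x (max t (-h))
  have hx' : ∀ j, Continuous fun t => x' t j := fun j => (continuous_apply j).comp
    (hx.comp_continuous (continuous_id.max continuous_const) fun t => le_max_right t (-h))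
  have hcont : Continuous fun t => delayField h A0 A hd B x' t i := by
    unfold delayField
    refine .add (.add ?_ ?_) ?_
    · exact continuous_finsetSum _ fun j _ => continuous_const.mul (hx' j)
    · exact continuous_finsetSum _ fun l _ => continuous_finsetSum _ fun j _ =>
        continuous_const.mul ((hx' j).comp (continuous_id.sub continuous_const))
    · exact continuous_finsetSum _ fun j _ =>
        continuous_intervalIntegral_mul_comp_add (neg_nonpos.2 hh) (hB i j) (hx' j)
  refine hcont.continuousOn.congr fun t ht => delayField_congr hh A0 A hdh B (fun u hu => ?_) i
  simp only [x', max_eq_left (show -h ≤ u by linarith [mem_Ici.1 ht, mem_Ici.1 hu])]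

theorem mul_delayField_add_mul_exp_lt_zero {h : ℝ} (hh : 0 ≤ h) {n m : ℕ}
    (A0 : Matrix (Fin n) (Fin n) ℝ) (A : Fin m → Matrix (Fin n) (Fin n) ℝ) {hd : Fin m → ℝ}
    {B : ℝ → Matrix (Fin n) (Fin n) ℝ} (hd0 : ∀ l, 0 ≤ hd l) (hdh : ∀ l, hd l ≤ h)
    (hB : ∀ i j, IntervalIntegrable (fun θ => B θ i j) volume (-h) 0)
    {ξ : Fin n → ℝ} (hξ : ∀ j, 0 ≤ ξ j) {α C : ℝ} (hα : 0 ≤ α) (hC : 0 < C) {i : Fin n}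
    (hαξ : (metz A0 *ᵥ ξ) i + Real.exp (α * h) * (delayMajorant h A B *ᵥ ξ) i + α * ξ i < 0)
    {x : ℝ → Fin n → ℝ} {t s : ℝ} (hs : |s| = 1)
    (hhist : ∀ u ∈ Icc (t - h) t, ∀ j, |x u j| ≤ C * ξ j * Real.exp (-α * u))
    (hxi : s * x t i = C * ξ i * Real.exp (-α * t)) :
    s * delayField h A0 A hd B x t i + α * (C * ξ i * Real.exp (-α * t)) < 0 := by
  set w := C * Real.exp (-α * t)
  have hw : 0 < w := mul_pos hC (Real.exp_pos _)
  have hcur : ∀ j, |x t j| ≤ (w • ξ) j := fun j => by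
    simpa [w, mul_right_comm] using hhist t ⟨by linarith, le_rfl⟩ j
  have hhist' : ∀ u ∈ Icc (t - h) t, ∀ j, |x u j| ≤ ((w * Real.exp (α * h)) • ξ) j := by
    intro u hu j
    calc |x u j| ≤ C * ξ j * Real.exp (-α * u) := hhist u hu j
      _ ≤ C * ξ j * Real.exp (-α * t + α * h) := by
          gcongr
          · exact mul_nonneg hC.le (hξ j)
          · nlinarith [hu.1]
      _ = ((w * Real.exp (α * h)) • ξ) j := by
          simp only [w, Pi.smul_apply, smul_eq_mul, Real.exp_add]; ring
  have hfield := mul_delayField_le (i := i) hh A0 A hd0 hdh hB hs hcur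
    (by rw [hxi, Pi.smul_apply, smul_eq_mul]; ring) hhist'
  simp only [mulVec_smul, Pi.smul_apply, smul_eq_mul] at hfield
  calc s * delayField h A0 A hd B x t i + α * (C * ξ i * Real.exp (-α * t))
      ≤ w * (metz A0 *ᵥ ξ) i + w * Real.exp (α * h) * (delayMajorant h A B *ᵥ ξ) i
          + α * (C * ξ i * Real.exp (-α * t)) := by linarith
    _ = w * ((metz A0 *ᵥ ξ) i + Real.exp (α * h) * (delayMajorant h A B *ᵥ ξ) i + α * ξ i) := by
          ring
    _ < 0 := mul_neg_of_pos_of_neg hw hαξ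

section Solution

variable {h : ℝ} {N n m : ℕ} {σ : ℝ → Fin N} {A0 : Fin N → Matrix (Fin n) (Fin n) ℝ}
  {A : Fin N → Fin m → Matrix (Fin n) (Fin n) ℝ} {hd : Fin N → Fin m → ℝ}
  {B : Fin N → ℝ → Matrix (Fin n) (Fin n) ℝ} {φ : C(Icc (-h) (0:ℝ), Fin n → ℝ)}
  {x : ℝ → Fin n → ℝ}

theorem IsSolutionD.abs_le_norm (hx : IsSolutionD h σ A0 A hd B φ x) {u : ℝ}
    (hu : u ∈ Icc (-h) 0) (j : Fin n) : |x u j| ≤ ‖φ‖ := by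
  rw [← Real.norm_eq_abs, hx.2.1 ⟨u, hu⟩]
  exact (norm_le_pi_norm _ j).trans (φ.norm_coe_le_norm _)

theorem IsSolutionD.eventually_hasDerivWithinAt (hx : IsSolutionD h σ A0 A hd B φ x)
    (hσ : IsSwitchingSignal σ) {T : ℝ} (hT : 0 ≤ T) :
    ∀ᶠ u in 𝓝[>] T, ∀ i, HasDerivWithinAt (fun s => x s i)
      (delayField h (A0 (σ T)) (A (σ T)) (hd (σ T)) (B (σ T)) x u i) (Ici u) u := by
  filter_upwards [hσ.eventually_nhdsGT_eventually_nhds_eq hT] with u ⟨hTu, hσu, hloc⟩ i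
  rw [← hσu]
  exact hx.2.2 u (hT.trans hTu.le) hloc i

theorem IsSolutionD.abs_le_mul_exp_of_pos (hx : IsSolutionD h σ A0 A hd B φ x)
    (hσ : IsSwitchingSignal σ) (hh : 0 ≤ h) (hd0 : ∀ k l, 0 ≤ hd k l) (hdh : ∀ k l, hd k l ≤ h)
    (hB : ∀ k i j, ContinuousOn (fun θ => B k θ i j) (Icc (-h) 0)) {ξ : Fin n → ℝ}
    (hξ : ∀ j, 0 ≤ ξ j) {α C : ℝ} (hα : 0 ≤ α)
    (hαξ : ∀ k i, (metz (A0 k) *ᵥ ξ) i +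
      Real.exp (α * h) * (delayMajorant h (A k) (B k) *ᵥ ξ) i + α * ξ i < 0)
    (hC : 0 < C) (hinit : ∀ u ∈ Icc (-h) 0, ∀ j, |x u j| ≤ C * ξ j * Real.exp (-α * u)) :
    ∀ t ≥ -h, ∀ j, |x t j| ≤ C * ξ j * Real.exp (-α * t) := by
  by_contra! hexit
  set b : ℝ → Fin n → ℝ := fun u j => C * ξ j * Real.exp (-α * u)
  have hb : Continuous b := by fun_prop
  obtain ⟨T, hT, hbound, hfreq⟩ :=
    exists_first_exit (neg_nonpos.2 hh) hx.1 hb.continuousOn hinit hexit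
  obtain ⟨i, s, hs, hfreq⟩ := exists_abs_eq_one_frequently_lt_mul hfreq
  set g := fun u => s * x u i - b u i
  have hg : ContinuousOn g (Ici T) :=
    (continuousOn_const.mul ((continuous_apply i).comp_continuousOn hx.1) |>.sub
      ((continuous_apply i).comp hb).continuousOn).mono (Ici_subset_Ici.2 (by linarith))
  have hgT : g T = 0 := le_antisymm
    (sub_nonpos.2 ((mul_le_abs_of_abs_eq_one hs _).trans (hbound T ⟨by linarith, le_rfl⟩ i)))
    (isClosed_Ici.mem_of_frequently_of_tendsto (hfreq.mono fun u hu => sub_nonneg.2 hu.le)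
      ((hg T (mem_Ici.2 le_rfl)).mono Ioi_subset_Ici_self))
  set G := fun u => s * delayField h (A0 (σ T)) (A (σ T)) (hd (σ T)) (B (σ T)) x u i +
    α * b u i
  have hGT : G T < 0 := mul_delayField_add_mul_exp_lt_zero hh _ _ (hd0 _) (hdh _)
    (fun i j => (hB _ i j).intervalIntegrable_of_Icc (neg_nonpos.2 hh)) hξ hα hC (hαξ _ i) hs
    (fun u hu => hbound u ⟨by linarith [hu.1], hu.2⟩) (sub_eq_zero.1 hgT)
  have hGc : ContinuousWithinAt G (Ioi T) T :=
    ((continuousOn_const.mul (continuousOn_delayField hh _ _ (hdh _) (hB _) hx.1 i)).add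
      (continuous_const.mul ((continuous_apply i).comp hb)).continuousOn).continuousWithinAt
      hT |>.mono (Ioi_subset_Ici_self.trans (Ici_subset_Ici.2 hT))
  have hder : ∀ᶠ u in 𝓝[>] T, HasDerivWithinAt g (G u) (Ici u) u ∧ G u ≤ 0 := by
    filter_upwards [hx.eventually_hasDerivWithinAt hσ hT, hGc.eventually (eventually_lt_nhds hGT)]
      with u hu hGu
    refine ⟨?_, hGu.le⟩
    have hbu : HasDerivAt (fun v => b v i) (C * ξ i * (Real.exp (-α * u) * (-α * 1))) u :=
      ((hasDerivAt_id u).const_mul (-α)).exp.const_mul (C * ξ i)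
    exact (((hu i).const_mul s).sub hbu.hasDerivWithinAt).congr_deriv (by simp only [G, b]; ring)
  obtain ⟨u, hu, hgu⟩ :=
    (hfreq.and_eventually (eventually_le_of_hasDerivWithinAt_Ici_nonpos hg hder)).exists
  have : 0 < g u := sub_pos.2 hu
  linarith

theorem IsSolutionD.abs_le_mul_exp (hx : IsSolutionD h σ A0 A hd B φ x)
    (hσ : IsSwitchingSignal σ) (hh : 0 ≤ h) (hd0 : ∀ k l, 0 ≤ hd k l) (hdh : ∀ k l, hd k l ≤ h)
    (hB : ∀ k i j, ContinuousOn (fun θ => B k θ i j) (Icc (-h) 0)) {ξ : Fin n → ℝ}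
    (hξ : ∀ j, 0 ≤ ξ j) {α c : ℝ} (hα : 0 ≤ α)
    (hαξ : ∀ k i, (metz (A0 k) *ᵥ ξ) i +
      Real.exp (α * h) * (delayMajorant h (A k) (B k) *ᵥ ξ) i + α * ξ i < 0)
    (hc : 0 ≤ c) (hinit : ∀ u ∈ Icc (-h) 0, ∀ j, |x u j| ≤ c * ξ j) {t : ℝ} (ht : -h ≤ t)
    (j : Fin n) :
    |x t j| ≤ c * ξ j * Real.exp (-α * t) := by
  have hC : ∀ C > c, |x t j| ≤ C * (ξ j * Real.exp (-α * t)) := fun C hC => by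
    rw [← mul_assoc]
    refine hx.abs_le_mul_exp_of_pos hσ hh hd0 hdh hB hξ hα hαξ (hc.trans_lt hC)
      (fun u hu j => ?_) t ht j
    calc |x u j| ≤ c * ξ j := hinit u hu j
      _ ≤ C * ξ j := mul_le_mul_of_nonneg_right hC.le (hξ j)
      _ ≤ C * ξ j * Real.exp (-α * u) := le_mul_of_one_le_right
          (mul_nonneg (hc.trans hC.le) (hξ j)) (Real.one_le_exp (by nlinarith [hu.2]))
  have hlim : Tendsto (fun C => C * (ξ j * Real.exp (-α * t))) (𝓝[>] c)
      (𝓝 (c * (ξ j * Real.exp (-α * t)))) :=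
    ((continuous_mul_const _).tendsto c).mono_left nhdsWithin_le_nhds
  rw [mul_assoc]
  exact ge_of_tendsto hlim (eventually_nhdsWithin_of_forall hC)

theorem IsSolutionD.norm_le_mul_exp (hx : IsSolutionD h σ A0 A hd B φ x)
    (hσ : IsSwitchingSignal σ) (hh : 0 ≤ h) (hd0 : ∀ k l, 0 ≤ hd k l) (hdh : ∀ k l, hd k l ≤ h)
    (hB : ∀ k i j, ContinuousOn (fun θ => B k θ i j) (Icc (-h) 0)) {ξ : Fin n → ℝ}
    (hξ : ∀ j, 0 < ξ j) {α : ℝ} (hα : 0 ≤ α)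
    (hαξ : ∀ k i, (metz (A0 k) *ᵥ ξ) i +
      Real.exp (α * h) * (delayMajorant h (A k) (B k) *ᵥ ξ) i + α * ξ i < 0)
    {t : ℝ} (ht : -h ≤ t) : ‖x t‖ ≤ ‖ξ‖ * ‖ξ⁻¹‖ * Real.exp (-α * t) * ‖φ‖ := by
  have hdecay := hx.abs_le_mul_exp hσ hh hd0 hdh hB (fun j => (hξ j).le) hα hαξ
    (c := ‖φ‖ * ‖ξ⁻¹‖) (by positivity)
    (fun u hu j => (hx.abs_le_norm hu j).trans <| by
      simpa [mul_assoc] using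
        le_mul_of_one_le_right (norm_nonneg φ) (one_le_norm_inv_mul_apply (hξ j)))
    ht
  refine (pi_norm_le_iff_of_nonneg (by positivity)).2 fun j => ?_
  calc ‖x t j‖ = |x t j| := Real.norm_eq_abs _
    _ ≤ ‖φ‖ * ‖ξ⁻¹‖ * ξ j * Real.exp (-α * t) := hdecay j
    _ ≤ ‖φ‖ * ‖ξ⁻¹‖ * ‖ξ‖ * Real.exp (-α * t) := by
        gcongr
        exact (Real.le_norm_self (ξ j)).trans (norm_le_pi_norm ξ j)
    _ = ‖ξ‖ * ‖ξ⁻¹‖ * Real.exp (-α * t) * ‖φ‖ := by ring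

end Solution

theorem expStableSwD_of_common_LCLF_general {N n m : ℕ} (h : ℝ) (hh : 0 < h)
    (A0 : Fin N → Matrix (Fin n) (Fin n) ℝ)
    (A : Fin N → Fin m → Matrix (Fin n) (Fin n) ℝ)
    (hd : Fin N → Fin m → ℝ)
    (hdpos : ∀ k l, 0 < hd k l) (hdle : ∀ k l, hd k l ≤ h)
    (B : Fin N → ℝ → Matrix (Fin n) (Fin n) ℝ)
    (hBcont : ∀ k i j, ContinuousOn (fun θ => B k θ i j) (Set.Icc (-h) 0))
    (ξ : Fin n → ℝ) (hξ : ∀ i, 0 < ξ i)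
    (hLCLF : ∀ k, ∀ i,
      ((metz (A0 k) + (∑ l, Matrix.of fun a b => |A k l a b|) +
          Matrix.of fun a b => ∫ s in (-h)..(0:ℝ), |B k s a b|).mulVec ξ) i < 0) :
    ExpStableSwD h A0 A hd B := by
  obtain ⟨α, hα, hαξ⟩ := exists_pos_forall_add_exp_mul_add_mul_neg h
    (p := fun p : Fin N × Fin n => (metz (A0 p.1) *ᵥ ξ) p.2)
    (q := fun p => (delayMajorant h (A p.1) (B p.1) *ᵥ ξ) p.2) (r := fun p => ξ p.2)
    fun p => by have := hLCLF p.1 p.2; rwa [add_assoc, add_mulVec] at this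
  -- `max 1` only keeps the constant positive when `n = 0`
  refine ⟨max 1 (‖ξ‖ * ‖ξ⁻¹‖), by positivity, α, hα, fun σ hσ φ x hx t ht => ?_⟩
  calc ‖x t‖ ≤ ‖ξ‖ * ‖ξ⁻¹‖ * Real.exp (-α * t) * ‖φ‖ :=
        hx.norm_le_mul_exp hσ hh.le (fun k l => (hdpos k l).le) hdle hBcont hξ hα.le
          (fun k i => hαξ (k, i)) (by linarith)
    _ ≤ max 1 (‖ξ‖ * ‖ξ⁻¹‖) * Real.exp (-α * t) * ‖φ‖ := by
        gcongr
        exact le_max_right _ _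

/-- Corollary 2: if there is `ξ ≫ 0` with
`(M(A⁰_k) + Σ_l |A^l_k| + ∫_{-h}^0 |B_k(s)| ds) ξ ≪ 0` for every `k`, then the switched
linear system with discrete delays `h^l_k ∈ (0, h]` and distributed delay kernel `B_k` is
exponentially stable under arbitrary switching. -/
theorem expStableSwD_of_common_LCLF {N n m : ℕ} (h : ℝ) (hh : 0 < h)
    (A0 : Fin N → Matrix (Fin n) (Fin n) ℝ)
    (A : Fin N → Fin m → Matrix (Fin n) (Fin n) ℝ)
    (hd : Fin N → Fin m → ℝ)
    (hdpos : ∀ k l, 0 < hd k l) (hdle : ∀ k l, hd k l ≤ h)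
    (hdmono : ∀ k, Monotone (hd k))
    (B : Fin N → ℝ → Matrix (Fin n) (Fin n) ℝ)
    (hBcont : ∀ k i j, ContinuousOn (fun θ => B k θ i j) (Set.Icc (-h) 0))
    (ξ : Fin n → ℝ) (hξ : ∀ i, 0 < ξ i)
    (hLCLF : ∀ k, ∀ i,
      ((metz (A0 k) + (∑ l, Matrix.of fun a b => |A k l a b|) +
          Matrix.of fun a b => ∫ s in (-h)..(0:ℝ), |B k s a b|).mulVec ξ) i < 0) :
    ExpStableSwD h A0 A hd B :=
  expStableSwD_of_common_LCLF_general h hh A0 A hd hdpos hdle B hBcont ξ hξ hLCLF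

end
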